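/- arXiv:2101.06038 — 6 statements merged into one kernel-verified Lean document; each statement's English description precedes it below -/
import Mathlib

section
/- Let μ be a discrete probability measure on ℝ whose atoms are contained in a lattice {a + b·l : l ∈ ℤ} for some a ∈ ℝ and b > 0, and suppose its characteristic function f satisfies f(t) ≠ 0 for all t ∈ ℝ. Then inf_{t∈ℝ} |f(t)| > 0. -/
open MeasureTheory Complex

/-!
The characteristic function of a measure living on the lattice `a + bℤ` satisfies
`f (t + 2π/b) = exp (2πi a/b) f t`, because `exp (2πi l) = 1` for every atom `a + b l`. Hence `|f|`
is continuous and `2π/b`-periodic, so it attains its infimum on one period, and that minimum is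
positive since `f` has no zeros.
-/

theorem MeasureTheory.ae_mem_of_countable_of_atoms_subset {α : Type*} [MeasurableSpace α]
    {μ : Measure α} {s L : Set α} (hs : s.Countable) (hμs : μ sᶜ = 0)
    (hL : ∀ x, 0 < μ {x} → x ∈ L) : ∀ᵐ x ∂μ, x ∈ L := by
  have hmem_s : ∀ᵐ x ∂μ, x ∈ s := by simpa using measure_eq_zero_iff_ae_notMem.mp hμs
  have havoid_off_L : ∀ᵐ x ∂μ, ∀ y ∈ s \ L, x ≠ y := by
    refine (ae_ball_iff (hs.mono Set.sdiff_subset)).mpr fun y hy => ?_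
    have hy0 : μ {y} = 0 := by
      by_contra h
      exact hy.2 (hL y (pos_iff_ne_zero.mpr h))
    simpa using measure_eq_zero_iff_ae_notMem.mp hy0
  filter_upwards [hmem_s, havoid_off_L] with x hxs hx
  by_contra hxL
  exact hx x ⟨hxs, hxL⟩ rfl

theorem Function.Periodic.exists_pos_le_norm {E : Type*} [NormedAddCommGroup E] {f : ℝ → E}
    {T : ℝ} (hp : Function.Periodic (fun t => ‖f t‖) T) (hT : T ≠ 0) (hf : Continuous f)
    (hnz : ∀ t, f t ≠ 0) : ∃ c, 0 < c ∧ ∀ t, c ≤ ‖f t‖ := by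
  obtain ⟨_, ⟨t₀, rfl⟩, hmin⟩ :=
    (hp.compact_of_continuous hT (continuous_norm.comp hf)).exists_isLeast (Set.range_nonempty _)
  exact ⟨‖f t₀‖, norm_pos_iff.mpr (hnz t₀), fun t => hmin ⟨t, rfl⟩⟩

theorem MeasureTheory.charFun_add_two_pi_div_of_ae_lattice {μ : Measure ℝ} {a b : ℝ} (hb : b ≠ 0)
    (hμ : ∀ᵐ x ∂μ, ∃ l : ℤ, x = a + b * l) (t : ℝ) :
    charFun μ (t + 2 * Real.pi / b) = exp (↑(2 * Real.pi / b * a) * I) * charFun μ t := by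
  rw [charFun_apply_real, charFun_apply_real, ← integral_const_mul]
  refine integral_congr_ae (hμ.mono fun x ⟨l, hx⟩ => ?_)
  have hb' : (b : ℂ) ≠ 0 := ofReal_ne_zero.mpr hb
  calc exp (↑(t + 2 * Real.pi / b) * x * I)
      = exp (↑(2 * Real.pi / b * a) * I + l * (2 * Real.pi * I) + t * x * I) := by
        subst hx; push_cast; field_simp; ring_nf
    _ = exp (↑(2 * Real.pi / b * a) * I) * exp (t * x * I) := by
        rw [exp_add, exp_add, exp_int_mul_two_pi_mul_I, mul_one]

theorem MeasureTheory.norm_charFun_periodic_of_ae_lattice {μ : Measure ℝ} {a b : ℝ} (hb : b ≠ 0)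
    (hμ : ∀ᵐ x ∂μ, ∃ l : ℤ, x = a + b * l) :
    Function.Periodic (fun t => ‖charFun μ t‖) (2 * Real.pi / b) := fun t => by
  simp only [charFun_add_two_pi_div_of_ae_lattice hb hμ t, norm_mul, norm_exp_ofReal_mul_I,
    one_mul]

/-- A discrete probability measure supported on a lattice `{a + b·l : l ∈ ℤ}`
whose characteristic function has no zeroes has characteristic function separated from zero. -/
theorem lattice_nonvanishing_charFun_separated_from_zero
    (μ : Measure ℝ) [IsProbabilityMeasure μ]
    (hdiscrete : ∃ s : Set ℝ, s.Countable ∧ μ sᶜ = 0)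
    (a b : ℝ) (hb : 0 < b)
    (hlattice : ∀ x : ℝ, 0 < μ {x} → ∃ l : ℤ, x = a + b * (l : ℝ))
    (f : ℝ → ℂ)
    (hf : ∀ t : ℝ, f t = ∫ x : ℝ, Complex.exp (Complex.I * (t : ℂ) * (x : ℂ)) ∂μ)
    (hnz : ∀ t : ℝ, f t ≠ 0) :
    ∃ c : ℝ, 0 < c ∧ ∀ t : ℝ, c ≤ ‖f t‖ := by
  obtain ⟨s, hs, hμs⟩ := hdiscrete
  have hf_eq : f = charFun μ := funext fun t => by
    simp only [hf, charFun_apply_real, mul_comm I, mul_right_comm _ I]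
  subst hf_eq
  have hμ : ∀ᵐ x ∂μ, ∃ l : ℤ, x = a + b * l := ae_mem_of_countable_of_atoms_subset hs hμs hlattice
  exact (norm_charFun_periodic_of_ae_lattice hb.ne' hμ).exists_pos_le_norm (by positivity)
    continuous_charFun hnz
end

section
/- Every discrete infinitely divisible probability measure on ℝ has characteristic function separated from zero: if μ is a discrete probability measure such that for every positive integer n there exists a probability measure ν_n with μ equal to the n-fold convolution power of ν_n, then the characteristic function f of μ satisfies inf_{t∈ℝ} |f(t)| > 0. -/
open MeasureTheory Complex

/-- The `n`-fold convolution power of a measure on `ℝ` (`ν^{*0} = δ_0`). -/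
noncomputable def convPow (ν : Measure ℝ) : ℕ → Measure ℝ
  | 0 => Measure.dirac 0
  | n + 1 => (convPow ν n).conv ν

/-!
Let `A_ρ k = ∫ k dρ` for `k` in the compact group `ℝ → Circle`. For discrete `ρ` this is a
countable sum of atoms, hence continuous in `k`, and at the character `x ↦ exp (itx)` it is the
characteristic function of `ρ` at `t`. If `μ = ν^{*n}` then `A_μ = A_ν ^ n` on the closure `K` of
the characters, a compact connected group. Each `A_ν` satisfies the positive-definiteness
inequality `(‖A_ν k‖ - ‖A_ν l‖)² ≤ 2 - 2 ‖A_ν (k l⁻¹)‖`. Now let `k₀` be a limit of points of `K`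
where `A_μ ≠ 0`: pick such a point `k₁` with `‖A_μ (k₁ k₀⁻¹)‖` close to `1`. For `n` large the
`n`-th roots `‖A_ν‖ = ‖A_μ‖ ^ (1/n)` are close to `1` at both `k₁` and `k₁ k₀⁻¹`, and the
inequality forces `A_ν k₀ ≠ 0`. So `{A_μ ≠ 0}` is clopen in `K`, hence all of `K`, and by
compactness `‖A_μ‖` is bounded below on `K` by some `c > 0`.
-/

open ComplexConjugate ProbabilityTheory

section Unimodular

variable {α : Type*} [MeasurableSpace α] {ρ : Measure α} [IsProbabilityMeasure ρ]
  {u v : α → ℂ}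

theorem sq_norm_integral_sub_le (hu : AEStronglyMeasurable u ρ)
    (hv : AEStronglyMeasurable v ρ) (hu1 : ∀ a, ‖u a‖ = 1) (hv1 : ∀ a, ‖v a‖ = 1) :
    ‖∫ a, u a ∂ρ - ∫ a, v a ∂ρ‖ ^ 2 ≤ 2 - 2 * (∫ a, u a * conj (v a) ∂ρ).re := by
  have hbound : ∀ a, ‖u a - v a‖ ≤ 2 := fun a =>
    (norm_sub_le _ _).trans (by rw [hu1, hv1]; norm_num)
  have hu_int : Integrable u ρ := .of_bound hu 1 (.of_forall fun a => (hu1 a).le)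
  have hv_int : Integrable v ρ := .of_bound hv 1 (.of_forall fun a => (hv1 a).le)
  have hmul_int : Integrable (fun a => u a * conj (v a)) ρ :=
    .of_bound (hu.mul hv.star) 1 (.of_forall fun a => by simp [hu1, hv1])
  have hre_int : Integrable (fun a => (u a * conj (v a)).re) ρ := hmul_int.re
  have hsq : ∀ a, ‖u a - v a‖ ^ 2 = 2 - 2 * (u a * conj (v a)).re := fun a => by
    rw [← normSq_eq_norm_sq, normSq_sub, normSq_eq_norm_sq, normSq_eq_norm_sq, hu1, hv1]
    ring
  have hmemLp : MemLp (fun a => ‖u a - v a‖) 2 ρ :=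
    .of_bound (hu_int.sub hv_int).norm.aestronglyMeasurable 2
      (.of_forall fun a => by simpa using hbound a)
  calc ‖∫ a, u a ∂ρ - ∫ a, v a ∂ρ‖ ^ 2
      ≤ (∫ a, ‖u a - v a‖ ∂ρ) ^ 2 := by
        rw [← integral_sub hu_int hv_int]
        exact pow_le_pow_left₀ (norm_nonneg _) (norm_integral_le_integral_norm _) 2
    _ ≤ ∫ a, ‖u a - v a‖ ^ 2 ∂ρ := by
        have := variance_nonneg (fun a => ‖u a - v a‖) ρ
        rw [variance_eq_sub hmemLp] at this
        simpa using this
    _ = 2 - 2 * (∫ a, u a * conj (v a) ∂ρ).re := by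
        simp_rw [hsq]
        rw [integral_sub (integrable_const _) (hre_int.const_mul 2), integral_const_mul,
          ← RCLike.re_eq_complex_re, integral_re hmul_int]
        simp

theorem sq_norm_integral_sub_norm_integral_le (hu : AEStronglyMeasurable u ρ)
    (hv : AEStronglyMeasurable v ρ) (hu1 : ∀ a, ‖u a‖ = 1) (hv1 : ∀ a, ‖v a‖ = 1) :
    (‖∫ a, u a ∂ρ‖ - ‖∫ a, v a ∂ρ‖) ^ 2 ≤ 2 - 2 * ‖∫ a, u a * conj (v a) ∂ρ‖ := by
  obtain ⟨c, hc1, hc⟩ := RCLike.exists_norm_eq_mul_self (∫ a, u a * conj (v a) ∂ρ)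
  have hcv1 : ∀ a, ‖conj c * v a‖ = 1 := fun a => by
    rw [norm_mul, RCLike.norm_conj, hc1, hv1, one_mul]
  have hnorm : ‖∫ a, v a ∂ρ‖ = ‖∫ a, conj c * v a ∂ρ‖ := by
    rw [integral_const_mul, norm_mul, RCLike.norm_conj, hc1, one_mul]
  have hre : (∫ a, u a * conj (conj c * v a) ∂ρ).re = ‖∫ a, u a * conj (v a) ∂ρ‖ := by
    simp_rw [map_mul, Complex.conj_conj, mul_left_comm _ c, integral_const_mul, ← hc]
    simp only [coe_algebraMap, ofReal_re]
  calc (‖∫ a, u a ∂ρ‖ - ‖∫ a, v a ∂ρ‖) ^ 2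
      = |‖∫ a, u a ∂ρ‖ - ‖∫ a, conj c * v a ∂ρ‖| ^ 2 := by rw [hnorm, sq_abs]
    _ ≤ ‖∫ a, u a ∂ρ - ∫ a, conj c * v a ∂ρ‖ ^ 2 :=
        pow_le_pow_left₀ (abs_nonneg _) (abs_norm_sub_norm_le _ _) 2
    _ ≤ 2 - 2 * ‖∫ a, u a * conj (v a) ∂ρ‖ :=
        hre ▸ sq_norm_integral_sub_le hu (hv.const_mul _) hu1 hcv1

end Unimodular

section Discrete

variable {α : Type*} [MeasurableSpace α] [MeasurableSingletonClass α] {ρ : Measure α}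
  {s : Set α}

theorem aestronglyMeasurable_of_countable_of_measure_compl_eq_zero {E : Type*}
    [NormedAddCommGroup E] [MeasurableSpace E] [BorelSpace E] [SecondCountableTopology E]
    (hs : s.Countable) (hρs : ρ sᶜ = 0) (f : α → E) : AEStronglyMeasurable f ρ := by
  have hmeas : Measurable (s.indicator f) :=
    measurable_const.measurable_of_countable_ne (hs.mono fun x hx => by
      by_contra hxs
      exact hx (Set.indicator_of_notMem hxs f).symm)
  refine hmeas.aestronglyMeasurable.congr ?_
  filter_upwards [mem_ae_iff.mpr hρs] with x hx
  exact Set.indicator_of_mem hx f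

theorem summable_measureReal_singleton [IsFiniteMeasure ρ] (hs : s.Countable) :
    Summable fun x : s => ρ.real {(x : α)} := by
  have htsum : ∑' x : s, ρ {(x : α)} = ρ s := by
    simpa using (lintegral_countable (μ := ρ) (fun _ => 1) hs).symm
  exact ENNReal.summable_toReal (htsum ▸ measure_ne_top ρ s)

theorem integral_eq_tsum_of_countable_of_measure_compl_eq_zero {E : Type*}
    [NormedAddCommGroup E] [NormedSpace ℝ E] [CompleteSpace E] (hs : s.Countable)
    (hρs : ρ sᶜ = 0) {f : α → E} (hf : Integrable f ρ) :
    ∫ x, f x ∂ρ = ∑' x : s, ρ.real {(x : α)} • f x := by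
  rw [← setIntegral_countable f hs hf.integrableOn,
    Measure.restrict_eq_self_of_ae_mem (mem_ae_iff.mpr hρs)]

end Discrete

theorem pos_of_forall_exists_root {G : Type*} [TopologicalSpace G] [Group G] [ContinuousMul G]
    [PreconnectedSpace G] {M : G → ℝ} (hM : Continuous M) (hM1 : M 1 = 1)
    (hroot : ∀ n : ℕ, 0 < n → ∃ φ : G → ℝ, (∀ x, 0 ≤ φ x) ∧
      (∀ x y, (φ x - φ y) ^ 2 ≤ 2 - 2 * φ (x * y⁻¹)) ∧ ∀ x, M x = φ x ^ n) (x : G) :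
    0 < M x := by
  suffices h : IsClopen {x | 0 < M x} from
    Set.eq_univ_iff_forall.mp (h.eq_univ ⟨1, by simp [hM1]⟩) x
  refine ⟨isClosed_of_closure_subset fun x₀ hx₀ => ?_, isOpen_lt continuous_const hM⟩
  -- Any threshold `r < 1` with `r > √(2 - 2r)` works: `7/8 > 1/2 = √(2 - 2 · 7/8)`.
  obtain ⟨x₁, hx₁, hMx₁⟩ : ∃ x₁, 7 / 8 < M (x₁ * x₀⁻¹) ∧ 0 < M x₁ :=
    mem_closure_iff.mp hx₀ {x | 7 / 8 < M (x * x₀⁻¹)}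
      (isOpen_lt continuous_const (hM.comp (continuous_mul_const _))) (by norm_num [hM1])
  obtain ⟨n, hn⟩ := exists_pow_lt_of_lt_one hMx₁ (by norm_num : (7 / 8 : ℝ) < 1)
  obtain ⟨φ, hφ0, hφ, hMφ⟩ := hroot (n + 1) n.succ_pos
  have hφ_gt : ∀ y, (7 / 8 : ℝ) ^ (n + 1) < M y → 7 / 8 < φ y := fun y hy =>
    lt_of_pow_lt_pow_left₀ (n + 1) (hφ0 y) (hMφ y ▸ hy)
  have h₁ := hφ_gt x₁
    ((pow_lt_pow_right_of_lt_one₀ (by norm_num) (by norm_num) n.lt_succ_self).trans hn)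
  have h₂ := hφ_gt _ ((pow_le_of_le_one (by norm_num) (by norm_num) n.succ_ne_zero).trans_lt hx₁)
  have h₀ : 0 < φ x₀ := by nlinarith [hφ x₁ x₀]
  simpa [hMφ x₀] using pow_pos h₀ (n + 1)

section ConvPow

instance isProbabilityMeasure_convPow (ν : Measure ℝ) [IsProbabilityMeasure ν] (n : ℕ) :
    IsProbabilityMeasure (convPow ν n) := by
  induction n with
  | zero => exact Measure.dirac.isProbabilityMeasure
  | succ n ih => exact inferInstanceAs (IsProbabilityMeasure ((convPow ν n) ∗ ν))

theorem charFun_convPow (ν : Measure ℝ) [IsProbabilityMeasure ν] (n : ℕ) (t : ℝ) :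
    charFun (convPow ν n) t = charFun ν t ^ n := by
  induction n with
  | zero => simp [convPow, charFun_dirac]
  | succ n ih => rw [convPow, charFun_conv, ih, pow_succ]

theorem exists_countable_measure_compl_eq_zero_of_conv {σ ν : Measure ℝ} [NeZero σ] [SFinite ν]
    {s : Set ℝ} (hs : s.Countable) (hσν : (σ ∗ ν) sᶜ = 0) :
    ∃ s' : Set ℝ, s'.Countable ∧ ν s'ᶜ = 0 := by
  have hsc : MeasurableSet sᶜ := hs.measurableSet.compl
  rw [Measure.conv, Measure.map_apply measurable_add hsc, Measure.prod_apply (measurable_add hsc),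
    lintegral_eq_zero_iff (measurable_measure_prodMk_left (measurable_add hsc))] at hσν
  obtain ⟨x, hx⟩ := (ae_neBot.mpr (NeZero.ne σ)).nonempty_of_mem hσν
  exact ⟨(x + ·) ⁻¹' s, hs.preimage (add_right_injective x), hx⟩

end ConvPow

section Bohr

def expCharacters : Subgroup (ℝ → Circle) where
  carrier := Set.range fun t x => Circle.exp (t * x)
  one_mem' := ⟨0, by ext; simp⟩
  mul_mem' := by
    rintro _ _ ⟨s, rfl⟩ ⟨t, rfl⟩
    exact ⟨s + t, by ext; simp [add_mul, Circle.exp_add]⟩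
  inv_mem' := by
    rintro _ ⟨t, rfl⟩
    exact ⟨-t, by ext; simp⟩

theorem isCompact_closure_expCharacters :
    IsCompact (expCharacters.topologicalClosure : Set (ℝ → Circle)) :=
  expCharacters.isClosed_topologicalClosure.isCompact

theorem isPreconnected_closure_expCharacters :
    IsPreconnected (expCharacters.topologicalClosure : Set (ℝ → Circle)) :=
  (isPreconnected_range (by fun_prop)).closure

noncomputable def bohrCharFun (ρ : Measure ℝ) (k : ℝ → Circle) : ℂ := ∫ x, (k x : ℂ) ∂ρ

variable {ρ : Measure ℝ} {s : Set ℝ}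

theorem bohrCharFun_exp (ρ : Measure ℝ) (t : ℝ) :
    bohrCharFun ρ (fun x => Circle.exp (t * x)) = charFun ρ t := by
  simp [bohrCharFun, charFun_apply_real, Circle.coe_exp]

theorem bohrCharFun_one [IsProbabilityMeasure ρ] : bohrCharFun ρ 1 = 1 := by
  simp [bohrCharFun]

theorem continuous_bohrCharFun [IsFiniteMeasure ρ] (hs : s.Countable) (hρs : ρ sᶜ = 0) :
    Continuous (bohrCharFun ρ) := by
  have hcoe : ∀ x : ℝ, Continuous fun k : ℝ → Circle => (k x : ℂ) := fun x =>
    continuous_induced_dom.comp (continuous_apply x)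
  have htsum : Continuous fun k : ℝ → Circle => ∑' x : s, ρ.real {(x : ℝ)} • (k x : ℂ) :=
    continuous_tsum (fun x => (hcoe x).fun_const_smul _) (summable_measureReal_singleton hs)
      fun x k => by rw [norm_smul, Circle.norm_coe, mul_one, Real.norm_of_nonneg measureReal_nonneg]
  refine htsum.congr fun k => ?_
  rw [bohrCharFun, integral_eq_tsum_of_countable_of_measure_compl_eq_zero hs hρs]
  exact .of_bound (aestronglyMeasurable_of_countable_of_measure_compl_eq_zero hs hρs _) 1
    (.of_forall fun x => (Circle.norm_coe _).le)

theorem sq_norm_bohrCharFun_sub_le [IsProbabilityMeasure ρ] (hs : s.Countable) (hρs : ρ sᶜ = 0)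
    (k l : ℝ → Circle) :
    (‖bohrCharFun ρ k‖ - ‖bohrCharFun ρ l‖) ^ 2 ≤ 2 - 2 * ‖bohrCharFun ρ (k * l⁻¹)‖ := by
  have := sq_norm_integral_sub_norm_integral_le (ρ := ρ)
    (aestronglyMeasurable_of_countable_of_measure_compl_eq_zero hs hρs fun x => (k x : ℂ))
    (aestronglyMeasurable_of_countable_of_measure_compl_eq_zero hs hρs fun x => (l x : ℂ))
    (fun x => Circle.norm_coe _) (fun x => Circle.norm_coe _)
  simpa only [bohrCharFun, Pi.mul_apply, Pi.inv_apply, Circle.coe_mul, Circle.coe_inv_eq_conj]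
    using this

theorem eqOn_closure_bohrCharFun_convPow {ν : Measure ℝ} [IsProbabilityMeasure ν] (n : ℕ)
    (hνn : Continuous (bohrCharFun (convPow ν n))) (hν : Continuous (bohrCharFun ν)) :
    Set.EqOn (bohrCharFun (convPow ν n)) (bohrCharFun ν ^ n)
      expCharacters.topologicalClosure := by
  refine Set.EqOn.closure ?_ hνn (hν.pow n)
  rintro _ ⟨t, rfl⟩
  simp [bohrCharFun_exp, charFun_convPow]

theorem exists_pos_le_norm_bohrCharFun {μ : Measure ℝ} [IsProbabilityMeasure μ]
    (hs : s.Countable) (hμs : μ sᶜ = 0)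
    (hID : ∀ n : ℕ, 0 < n → ∃ ν : Measure ℝ, IsProbabilityMeasure ν ∧ μ = convPow ν n) :
    ∃ c : ℝ, 0 < c ∧ ∀ k ∈ expCharacters.topologicalClosure, c ≤ ‖bohrCharFun μ k‖ := by
  set K := expCharacters.topologicalClosure
  have hμ := continuous_bohrCharFun hs hμs
  have hpos : ∀ k : K, 0 < ‖bohrCharFun μ k‖ := by
    have : PreconnectedSpace K := Subtype.preconnectedSpace isPreconnected_closure_expCharacters
    refine pos_of_forall_exists_root (hμ.norm.comp continuous_subtype_val)
      (by simp [bohrCharFun_one]) fun n hn => ?_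
    obtain ⟨ν, hν, rfl⟩ := hID n hn
    obtain ⟨m, rfl⟩ := Nat.exists_eq_add_one_of_ne_zero hn.ne'
    obtain ⟨s', hs', hνs'⟩ :=
      exists_countable_measure_compl_eq_zero_of_conv (σ := convPow ν m) hs hμs
    refine ⟨fun k => ‖bohrCharFun ν k‖, fun _ => norm_nonneg _,
      fun k l => sq_norm_bohrCharFun_sub_le hs' hνs' k l, fun k => ?_⟩
    rw [eqOn_closure_bohrCharFun_convPow _ hμ (continuous_bohrCharFun hs' hνs') k.2,
      Pi.pow_apply, norm_pow]
  obtain ⟨k₀, hk₀, hmin⟩ := isCompact_closure_expCharacters.exists_isMinOn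
    ⟨1, K.one_mem⟩ hμ.norm.continuousOn
  exact ⟨_, hpos ⟨k₀, hk₀⟩, fun k hk => hmin hk⟩

end Bohr

/-- Every discrete infinitely divisible probability measure on `ℝ` has
characteristic function separated from zero. -/
theorem charFun_separated_of_discrete_infinitely_divisible
    (μ : Measure ℝ) [IsProbabilityMeasure μ]
    (hdiscrete : ∃ s : Set ℝ, s.Countable ∧ μ sᶜ = 0)
    (hID : ∀ n : ℕ, 0 < n → ∃ ν : Measure ℝ, IsProbabilityMeasure ν ∧ μ = convPow ν n)
    (f : ℝ → ℂ)
    (hf : ∀ t : ℝ, f t = ∫ x : ℝ, Complex.exp (Complex.I * (t : ℂ) * (x : ℂ)) ∂μ) :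
    ∃ c : ℝ, 0 < c ∧ ∀ t : ℝ, c ≤ ‖f t‖ := by
  obtain ⟨s, hs, hμs⟩ := hdiscrete
  obtain ⟨c, hc, hle⟩ := exists_pos_le_norm_bohrCharFun hs hμs hID
  refine ⟨c, hc, fun t => ?_⟩
  have hft : f t = bohrCharFun μ (fun x => Circle.exp (t * x)) := by
    rw [hf, bohrCharFun_exp, charFun_apply_real]
    simp_rw [mul_comm I, mul_right_comm]
  exact hft ▸ hle _ (subset_closure ⟨t, rfl⟩)
end

section
/- For n ∈ ℕ let G_n = (1/2 + 1/(2+n))·δ_0 + (1/2 − 1/(2+n))·δ_1 and let G = (1/2)·δ_0 + (1/2)·δ_1. Then: (a) ‖G_n − G‖ → 0 as n → ∞ (convergence in total variation); (b) for every n, the characteristic function g_n of G_n satisfies inf_{t∈ℝ} |g_n(t)| > 0, so G_n ∈ DS; (c) the characteristic function g(t) = 1/2 + (1/2)e^{it} of G vanishes at t = π, so G ∉ DS. Consequently the class DS is not closed under convergence in variation. -/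
open MeasureTheory Complex Filter
open scoped ENNReal

/-!
With `ε = 1/(2+n)` one has `G_n + ε δ_1 = G + ε δ_0`, so `G_n` and `G` differ by at most `ε` on
every set and `‖G_n − G‖ ≤ 2ε`. The characteristic function of `p δ_0 + q δ_1` is `p + q e^{it}`,
whose modulus is at least `|p − q|`; this is `2ε > 0` for `G_n`, while for `G` the two weights
are equal and `1/2 + 1/2 e^{iπ} = 0`.
-/

/-- The total variation distance `‖μ − ν‖` between two finite Borel measures on `ℝ`
(for finite measures this supremum equals the total variation of the signed measure
`μ − ν` evaluated on all of `ℝ`). -/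
noncomputable def tvDist (μ ν : Measure ℝ) : ℝ≥0∞ :=
  ⨆ (s : Set ℝ) (_ : MeasurableSet s), ((μ s - ν s) + (ν sᶜ - μ sᶜ))

lemma tvDist_le_of_add_eq_add {μ ν ρ ρ' : Measure ℝ} (h : μ + ρ' = ν + ρ) :
    tvDist μ ν ≤ ρ Set.univ + ρ' Set.univ := by
  have sub_le_univ {μ ν ρ ρ' : Measure ℝ} (h : μ + ρ' = ν + ρ) (u : Set ℝ) :
      μ u - ν u ≤ ρ Set.univ := by
    refine tsub_le_iff_left.2 ?_
    calc μ u ≤ (μ + ρ') u := Measure.le_add_right le_rfl u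
      _ = ν u + ρ u := by rw [h, Measure.add_apply]
      _ ≤ ν u + ρ Set.univ := by gcongr; exact u.subset_univ
  exact iSup₂_le fun s _ => add_le_add (sub_le_univ h s) (sub_le_univ h.symm sᶜ)

section TwoPoint

variable {p q e x y : ℝ}

noncomputable def twoPointMeasure (p q x y : ℝ) : Measure ℝ :=
  ENNReal.ofReal p • Measure.dirac x + ENNReal.ofReal q • Measure.dirac y

lemma integral_twoPointMeasure {E : Type*} [NormedAddCommGroup E] [NormedSpace ℝ E]
    [CompleteSpace E] (hp : 0 ≤ p) (hq : 0 ≤ q) (f : ℝ → E) :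
    ∫ z, f z ∂twoPointMeasure p q x y = p • f x + q • f y := by
  have hint : ∀ (r : ℝ) (a : ℝ), Integrable f (ENNReal.ofReal r • Measure.dirac a) :=
    fun r a => (integrable_dirac enorm_lt_top).smul_measure ENNReal.ofReal_ne_top
  rw [twoPointMeasure, integral_add_measure (hint p x) (hint q y), integral_smul_measure,
    integral_smul_measure, integral_dirac, integral_dirac, ENNReal.toReal_ofReal hp,
    ENNReal.toReal_ofReal hq]

lemma twoPointMeasure_add_smul_dirac (hp : 0 ≤ p) (he : 0 ≤ e) (heq : e ≤ q) :
    twoPointMeasure (p + e) (q - e) x y + ENNReal.ofReal e • Measure.dirac y =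
      twoPointMeasure p q x y + ENNReal.ofReal e • Measure.dirac x := by
  have hq : ENNReal.ofReal q = ENNReal.ofReal (q - e) + ENNReal.ofReal e := by
    rw [← ENNReal.ofReal_add (sub_nonneg.2 heq) he, sub_add_cancel]
  simp only [twoPointMeasure, ENNReal.ofReal_add hp he, hq, add_smul]
  abel

lemma tvDist_twoPointMeasure_le (hp : 0 ≤ p) (he : 0 ≤ e) (heq : e ≤ q) :
    tvDist (twoPointMeasure (p + e) (q - e) x y) (twoPointMeasure p q x y) ≤
      2 * ENNReal.ofReal e := by
  refine (tvDist_le_of_add_eq_add (twoPointMeasure_add_smul_dirac hp he heq)).trans_eq ?_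
  simp [two_mul]

lemma abs_sub_le_norm_integral_exp_twoPointMeasure (hp : 0 ≤ p) (hq : 0 ≤ q) (t : ℝ) :
    |p - q| ≤ ‖∫ z, exp (I * t * z) ∂twoPointMeasure p q x y‖ := by
  have hnorm : ∀ z : ℝ, ‖exp (I * t * z)‖ = 1 := fun z => by
    rw [mul_assoc, ← ofReal_mul, norm_exp_I_mul_ofReal]
  rw [integral_twoPointMeasure hp hq]
  calc |p - q| = |‖p • exp (I * t * x)‖ - ‖-(q • exp (I * t * y))‖| := by
        rw [norm_neg, norm_smul, norm_smul, hnorm, hnorm, Real.norm_of_nonneg hp,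
          Real.norm_of_nonneg hq, mul_one, mul_one]
    _ ≤ ‖p • exp (I * t * x) - -(q • exp (I * t * y))‖ := abs_norm_sub_norm_le _ _
    _ = _ := by rw [sub_neg_eq_add]

end TwoPoint

/-- For `G_n = (1/2 + 1/(2+n))·δ_0 + (1/2 − 1/(2+n))·δ_1` and
`G = (1/2)·δ_0 + (1/2)·δ_1`: (a) `G_n → G` in total variation; (b) each `G_n` has
characteristic function separated from zero (so `G_n ∈ DS`); (c) the characteristic
function of `G` vanishes at `t = π` (so `G ∉ DS`). Hence `DS` is not closed under
convergence in variation. -/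
theorem DS_not_closed_in_variation
    (Gn : ℕ → Measure ℝ) (G : Measure ℝ)
    (hGn : ∀ n : ℕ, Gn n =
      ENNReal.ofReal (1 / 2 + 1 / (2 + (n : ℝ))) • Measure.dirac (0 : ℝ) +
      ENNReal.ofReal (1 / 2 - 1 / (2 + (n : ℝ))) • Measure.dirac (1 : ℝ))
    (hG : G = ENNReal.ofReal (1 / 2) • Measure.dirac (0 : ℝ) +
      ENNReal.ofReal (1 / 2) • Measure.dirac (1 : ℝ)) :
    Tendsto (fun n : ℕ => tvDist (Gn n) G) atTop (nhds 0) ∧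
    (∀ n : ℕ, ∃ c : ℝ, 0 < c ∧ ∀ t : ℝ,
      c ≤ ‖∫ x : ℝ, Complex.exp (Complex.I * (t : ℂ) * (x : ℂ)) ∂(Gn n)‖) ∧
    (∫ x : ℝ, Complex.exp (Complex.I * (Real.pi : ℂ) * (x : ℂ)) ∂G) = 0 := by
  set ε : ℕ → ℝ := fun n => 1 / (2 + (n : ℝ))
  have hε_pos (n : ℕ) : 0 < ε n := by positivity
  have hε_le (n : ℕ) : ε n ≤ 1 / 2 := one_div_le_one_div_of_le two_pos (by simp)
  have hε_lim : Tendsto ε atTop (nhds 0) :=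
    tendsto_const_nhds.div_atTop (tendsto_atTop_add_const_left _ _ tendsto_natCast_atTop_atTop)
  replace hGn (n : ℕ) : Gn n = twoPointMeasure (1 / 2 + ε n) (1 / 2 - ε n) 0 1 := hGn n
  replace hG : G = twoPointMeasure (1 / 2) (1 / 2) 0 1 := hG
  refine ⟨?_, fun n => ⟨2 * ε n, by positivity, fun t => ?_⟩, ?_⟩
  · have hbound (n : ℕ) : tvDist (Gn n) G ≤ 2 * ENNReal.ofReal (ε n) := by
      rw [hGn, hG]
      exact tvDist_twoPointMeasure_le one_half_pos.le (hε_pos n).le (hε_le n)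
    have hlim := ENNReal.Tendsto.const_mul (ENNReal.tendsto_ofReal hε_lim)
      (.inr (by simp : (2 : ℝ≥0∞) ≠ ∞))
    rw [ENNReal.ofReal_zero, mul_zero] at hlim
    exact tendsto_of_tendsto_of_tendsto_of_le_of_le tendsto_const_nhds hlim (fun _ => zero_le)
      hbound
  · calc 2 * ε n = |(1 / 2 + ε n) - (1 / 2 - ε n)| := by
          rw [abs_of_nonneg (by linarith [hε_pos n])]; ring
      _ ≤ _ := by
          rw [hGn]
          exact abs_sub_le_norm_integral_exp_twoPointMeasure (by linarith [hε_pos n])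
            (by linarith [hε_le n]) t
  · rw [hG, integral_twoPointMeasure one_half_pos.le one_half_pos.le, mul_comm I, ofReal_one,
      mul_one, exp_pi_mul_I]
    simp
end

section
/- Let f : ℝ → ℂ satisfy f(t) = exp(itγ + Σ_{u} λ(u)(e^{itu} − 1)) for all t ∈ ℝ, where γ ∈ ℝ and λ : ℝ → ℝ has countable support, λ(0) = 0, and Σ_u |λ(u)| < ∞. If θ : ℝ → ℝ is any continuous function with θ(0) = 0 and f(t) = |f(t)|·e^{iθ(t)} for all t ∈ ℝ, then |θ(t) − tγ| ≤ Σ_u |λ(u)| for all t, and consequently θ(T)/T → γ as T → ∞ (γ is the 'mean motion' of the argument of f). -/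
open Complex Filter

/-! Write `f = exp ∘ A` with `A t = i t γ + ∑ λ(u) (e^{itu} - 1)`, which is continuous by uniform
convergence. Then `θ` and `Im ∘ A` are two continuous lifts of `f / |f|` through the covering map
`x ↦ e^{ix}` that agree at `0`, hence coincide, and `Im A t - t γ = ∑ λ(u) sin (t u)` is bounded
by `∑ |λ(u)|`. -/

noncomputable def compoundPoissonExponent (l : ℝ → ℝ) (t : ℝ) : ℂ :=
  ∑' u : ℝ, (l u : ℂ) * (exp (I * t * u) - 1)

theorem norm_exp_I_mul_ofReal_sub_one_le_two (x : ℝ) : ‖exp (I * x) - 1‖ ≤ 2 := by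
  calc ‖exp (I * x) - 1‖ ≤ ‖exp (I * x)‖ + ‖(1 : ℂ)‖ := norm_sub_le _ _
    _ = 2 := by rw [mul_comm, norm_exp_ofReal_mul_I, norm_one]; norm_num

theorem norm_ofReal_mul_exp_I_mul_sub_one_le (c t u : ℝ) :
    ‖(c : ℂ) * (exp (I * t * u) - 1)‖ ≤ 2 * |c| := by
  rw [norm_mul, norm_real, Real.norm_eq_abs, mul_comm, mul_assoc, ← ofReal_mul]
  exact mul_le_mul_of_nonneg_right (norm_exp_I_mul_ofReal_sub_one_le_two _) (abs_nonneg _)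

theorem im_ofReal_mul_exp_I_mul_sub_one (c t u : ℝ) :
    ((c : ℂ) * (exp (I * t * u) - 1)).im = c * Real.sin (t * u) := by
  rw [mul_assoc, ← ofReal_mul, mul_comm I, im_ofReal_mul, sub_im, exp_ofReal_mul_I_im, one_im,
    sub_zero]

section CompoundPoisson

variable {l : ℝ → ℝ}

theorem compoundPoissonExponent_zero : compoundPoissonExponent l 0 = 0 := by
  simp [compoundPoissonExponent]

theorem continuous_compoundPoissonExponent (hl : Summable fun u => |l u|) :
    Continuous (compoundPoissonExponent l) :=
  continuous_tsum (fun u => by fun_prop) (hl.mul_left 2)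
    (fun u t => norm_ofReal_mul_exp_I_mul_sub_one_le (l u) t u)

theorem abs_im_compoundPoissonExponent_le (hl : Summable fun u => |l u|) (t : ℝ) :
    |(compoundPoissonExponent l t).im| ≤ ∑' u, |l u| := by
  have hsummable : Summable fun u => (l u : ℂ) * (exp (I * t * u) - 1) :=
    (hl.mul_left 2).of_norm_bounded (fun u => norm_ofReal_mul_exp_I_mul_sub_one_le (l u) t u)
  have hterm : ∀ u, |l u * Real.sin (t * u)| ≤ |l u| := fun u => by
    rw [abs_mul]; exact mul_le_of_le_one_right (abs_nonneg _) (Real.abs_sin_le_one _)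
  have habs : Summable fun u => |l u * Real.sin (t * u)| :=
    hl.of_nonneg_of_le (fun _ => abs_nonneg _) hterm
  rw [compoundPoissonExponent, im_tsum hsummable]
  simp only [im_ofReal_mul_exp_I_mul_sub_one]
  calc |∑' u, l u * Real.sin (t * u)| ≤ ∑' u, |l u * Real.sin (t * u)| :=
        Real.norm_eq_abs _ ▸ norm_tsum_le_tsum_norm habs
    _ ≤ ∑' u, |l u| := habs.tsum_le_tsum hterm hl

end CompoundPoisson

theorem eq_of_continuous_of_exp_mul_I_eq {X : Type*} [TopologicalSpace X] [PreconnectedSpace X]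
    {a b : X → ℝ} (ha : Continuous a) (hb : Continuous b)
    (h : ∀ x, exp (a x * I) = exp (b x * I)) (x₀ : X) (h₀ : a x₀ = b x₀) : a = b :=
  Circle.isCoveringMap_exp.eq_of_comp_eq ha hb
    (funext fun x => Circle.ext (by simpa only [Function.comp, Circle.coe_exp] using h x)) x₀ h₀

theorem exp_mul_I_eq_exp_im_mul_I {z : ℂ} {θ : ℝ} (h : exp z = ‖exp z‖ * exp (I * θ)) :
    exp (θ * I) = exp (z.im * I) := by
  have hpolar : exp z = ‖exp z‖ * exp (z.im * I) := by
    conv_lhs => rw [← re_add_im z]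
    rw [exp_add, norm_exp, ofReal_exp]
  rw [mul_comm I] at h
  exact mul_left_cancel₀ (by simp) (h.symm.trans hpolar)

theorem tendsto_div_atTop_of_abs_sub_mul_le {θ : ℝ → ℝ} {γ C : ℝ}
    (h : ∀ t, |θ t - t * γ| ≤ C) : Tendsto (fun T => θ T / T) atTop (nhds γ) := by
  have hC : Tendsto (fun T : ℝ => C / T) atTop (nhds 0) := tendsto_const_nhds.div_atTop tendsto_id
  refine tendsto_sub_nhds_zero_iff.mp (squeeze_zero_norm' ?_ hC)
  filter_upwards [eventually_gt_atTop 0] with T hT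
  rw [Real.norm_eq_abs, div_sub' hT.ne', abs_div, abs_of_pos hT]
  exact div_le_div_of_nonneg_right (h T) hT.le

theorem mean_motion_of_argument_general
    (f : ℝ → ℂ) (γ : ℝ) (l : ℝ → ℝ)
    (hsum : Summable fun u : ℝ => |l u|)
    (hf : ∀ t : ℝ, f t = Complex.exp (Complex.I * (t : ℂ) * (γ : ℂ) +
      ∑' u : ℝ, (l u : ℂ) * (Complex.exp (Complex.I * (t : ℂ) * (u : ℂ)) - 1)))
    (θ : ℝ → ℝ) (hθcont : Continuous θ) (hθ0 : θ 0 = 0)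
    (hθ : ∀ t : ℝ, f t = (‖f t‖ : ℂ) * Complex.exp (Complex.I * (θ t : ℂ))) :
    (∀ t : ℝ, |θ t - t * γ| ≤ ∑' u : ℝ, |l u|) ∧
      Tendsto (fun T : ℝ => θ T / T) atTop (nhds γ) := by
  set A : ℝ → ℂ := fun t => I * t * γ + compoundPoissonExponent l t
  have hA : Continuous A := by
    have := continuous_compoundPoissonExponent hsum
    fun_prop
  have hθA : θ = fun t => (A t).im :=
    eq_of_continuous_of_exp_mul_I_eq hθcont (continuous_im.comp hA)
      (fun t => exp_mul_I_eq_exp_im_mul_I (hf t ▸ hθ t)) 0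
      (by simp [A, hθ0, compoundPoissonExponent_zero])
  have hbound : ∀ t : ℝ, |θ t - t * γ| ≤ ∑' u : ℝ, |l u| := fun t => by
    simpa [hθA, A] using abs_im_compoundPoissonExponent_le hsum t
  exact ⟨hbound, tendsto_div_atTop_of_abs_sub_mul_le hbound⟩

/-- If `f(t) = exp(itγ + ∑_u λ(u)(e^{itu} − 1))` with `∑_u |λ(u)| < ∞`,
and `θ` is a continuous determination of the argument of `f` with `θ(0) = 0`, then
`|θ(t) − tγ| ≤ ∑_u |λ(u)|` for all `t`, and hence `θ(T)/T → γ` as `T → ∞`: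
`γ` is the mean motion of the argument of `f`. -/
theorem mean_motion_of_argument
    (f : ℝ → ℂ) (γ : ℝ) (l : ℝ → ℝ)
    (hcount : (Function.support l).Countable) (hl0 : l 0 = 0)
    (hsum : Summable fun u : ℝ => |l u|)
    (hf : ∀ t : ℝ, f t = Complex.exp (Complex.I * (t : ℂ) * (γ : ℂ) +
      ∑' u : ℝ, (l u : ℂ) * (Complex.exp (Complex.I * (t : ℂ) * (u : ℂ)) - 1)))
    (θ : ℝ → ℝ) (hθcont : Continuous θ) (hθ0 : θ 0 = 0)
    (hθ : ∀ t : ℝ, f t = (‖f t‖ : ℂ) * Complex.exp (Complex.I * (θ t : ℂ))) :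
    (∀ t : ℝ, |θ t - t * γ| ≤ ∑' u : ℝ, |l u|) ∧
      Tendsto (fun T : ℝ => θ T / T) atTop (nhds γ) :=
  mean_motion_of_argument_general f γ l hsum hf θ hθcont hθ0 hθ
end

section
/- Suppose γ, γ' ∈ ℝ and λ, λ' : ℝ → ℝ each have countable support, vanish at 0, and satisfy Σ_u |λ(u)| < ∞ and Σ_u |λ'(u)| < ∞. If exp(itγ + Σ_u λ(u)(e^{itu} − 1)) = exp(itγ' + Σ_u λ'(u)(e^{itu} − 1)) for all t ∈ ℝ, then γ = γ' and λ(u) = λ'(u) for all u ∈ ℝ. -/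
open Complex Filter

lemma aux_norm_exp (a : ℝ) : ‖Complex.exp ((a : ℂ) * Complex.I)‖ = 1 := by
  exact Complex.norm_exp_ofReal_mul_I a

lemma aux_norm_exp' (t u : ℝ) : ‖Complex.exp (Complex.I * (t : ℂ) * (u : ℂ))‖ = 1 := by
  have : Complex.I * (t : ℂ) * (u : ℂ) = ((t * u : ℝ) : ℂ) * Complex.I := by push_cast; ring
  rw [this]; exact aux_norm_exp _

lemma aux_summable {m : ℝ → ℝ} (h : Summable fun u => |m u|) (g : ℝ → ℂ)
    (hg : ∀ u, ‖g u‖ ≤ 2) : Summable fun u => (m u : ℂ) * g u := by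
  apply Summable.of_norm
  apply Summable.of_nonneg_of_le (fun u => norm_nonneg _) (fun u => ?_) (h.mul_left 2)
  rw [norm_mul, Complex.norm_real]
  calc ‖m u‖ * ‖g u‖ ≤ ‖m u‖ * 2 := mul_le_mul_of_nonneg_left (hg u) (norm_nonneg _)
    _ = 2 * |m u| := by rw [Real.norm_eq_abs]; ring

lemma aux_int_valued {g : ℝ → ℝ} (hg : Continuous g) (h : ∀ t, ∃ n : ℤ, g t = n)
    (h0 : g 0 = 0) : ∀ t, g t = 0 := by
  intro t
  obtain ⟨n, hn⟩ := h t
  by_contra hne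
  have hn0 : n ≠ 0 := by rintro rfl; simp at hn; exact hne hn
  have ivt := intermediate_value_uIcc (a := 0) (b := t) hg.continuousOn
  rcases lt_or_gt_of_ne hn0 with hlt | hgt
  · have hmem : (-(1:ℝ)/2) ∈ Set.uIcc (g 0) (g t) := by
      rw [h0, hn, Set.mem_uIcc]
      right
      constructor
      · have h1 : n ≤ -1 := by omega
        have : (n : ℝ) ≤ -1 := by exact_mod_cast h1
        linarith
      · linarith
    obtain ⟨s, _, hs⟩ := ivt hmem
    obtain ⟨k, hk⟩ := h s
    rw [hk] at hs
    have : (2 * k : ℤ) = (-1 : ℤ) := by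
      have : (2 : ℝ) * k = -1 := by linarith
      exact_mod_cast this
    omega
  · have hmem : ((1:ℝ)/2) ∈ Set.uIcc (g 0) (g t) := by
      rw [h0, hn, Set.mem_uIcc]
      left
      constructor
      · linarith
      · have h1 : 1 ≤ n := by omega
        have : (1 : ℝ) ≤ n := by exact_mod_cast h1
        linarith
    obtain ⟨s, _, hs⟩ := ivt hmem
    obtain ⟨k, hk⟩ := h s
    rw [hk] at hs
    have : (2 * k : ℤ) = (1 : ℤ) := by
      have : (2 : ℝ) * k = 1 := by linarith
      exact_mod_cast this
    omega

/-- Uniqueness of the spectral representation: if two representations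
`exp(itγ + ∑_u λ(u)(e^{itu} − 1))` and `exp(itγ' + ∑_u λ'(u)(e^{itu} − 1))` coincide for
all `t ∈ ℝ`, then `γ = γ'` and `λ = λ'`. -/
theorem spectral_representation_unique
    (γ γ' : ℝ) (l l' : ℝ → ℝ)
    (hlc : (Function.support l).Countable) (hl0 : l 0 = 0)
    (hls : Summable fun u : ℝ => |l u|)
    (hlc' : (Function.support l').Countable) (hl0' : l' 0 = 0)
    (hls' : Summable fun u : ℝ => |l' u|)
    (heq : ∀ t : ℝ,
      Complex.exp (Complex.I * (t : ℂ) * (γ : ℂ) +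
        ∑' u : ℝ, (l u : ℂ) * (Complex.exp (Complex.I * (t : ℂ) * (u : ℂ)) - 1)) =
      Complex.exp (Complex.I * (t : ℂ) * (γ' : ℂ) +
        ∑' u : ℝ, (l' u : ℂ) * (Complex.exp (Complex.I * (t : ℂ) * (u : ℂ)) - 1))) :
    γ = γ' ∧ ∀ u : ℝ, l u = l' u := by
  set m : ℝ → ℝ := fun u => l u - l' u with hm
  have hms : Summable fun u => |m u| := by
    apply Summable.of_nonneg_of_le (fun u => abs_nonneg _) (fun u => abs_sub _ _) (hls.add hls')
  have hE2 : ∀ t u : ℝ, ‖Complex.exp (Complex.I * (t : ℂ) * (u : ℂ)) - 1‖ ≤ 2 := by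
    intro t u
    calc ‖Complex.exp (Complex.I * (t : ℂ) * (u : ℂ)) - 1‖
        ≤ ‖Complex.exp (Complex.I * (t : ℂ) * (u : ℂ))‖ + ‖(1:ℂ)‖ := norm_sub_le _ _
      _ = 2 := by rw [aux_norm_exp']; norm_num
  have SA : ∀ t : ℝ, Summable fun u : ℝ =>
      (l u : ℂ) * (Complex.exp (Complex.I * (t : ℂ) * (u : ℂ)) - 1) :=
    fun t => aux_summable hls _ (hE2 t)
  have SA' : ∀ t : ℝ, Summable fun u : ℝ =>
      (l' u : ℂ) * (Complex.exp (Complex.I * (t : ℂ) * (u : ℂ)) - 1) :=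
    fun t => aux_summable hls' _ (hE2 t)
  have Sm : ∀ t : ℝ, Summable fun u : ℝ =>
      (m u : ℂ) * (Complex.exp (Complex.I * (t : ℂ) * (u : ℂ)) - 1) :=
    fun t => aux_summable hms _ (hE2 t)
  have Sm' : ∀ t : ℝ, Summable fun u : ℝ =>
      (m u : ℂ) * Complex.exp (Complex.I * (t : ℂ) * (u : ℂ)) :=
    fun t => aux_summable hms _ (fun u => by rw [aux_norm_exp']; norm_num)
  set f : ℝ → ℂ := fun t => Complex.I * (t : ℂ) * ((γ : ℂ) - (γ' : ℂ)) +
      ∑' u : ℝ, (m u : ℂ) * (Complex.exp (Complex.I * (t : ℂ) * (u : ℂ)) - 1) with hfdef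
  have hexp : ∀ t, Complex.exp (f t) = 1 := by
    intro t
    have hsub : f t = (Complex.I * (t : ℂ) * (γ : ℂ) +
        ∑' u : ℝ, (l u : ℂ) * (Complex.exp (Complex.I * (t : ℂ) * (u : ℂ)) - 1)) -
        (Complex.I * (t : ℂ) * (γ' : ℂ) +
        ∑' u : ℝ, (l' u : ℂ) * (Complex.exp (Complex.I * (t : ℂ) * (u : ℂ)) - 1)) := by
      rw [hfdef]
      have key : (∑' u : ℝ, (m u : ℂ) * (Complex.exp (Complex.I * (t : ℂ) * (u : ℂ)) - 1)) =
          (∑' u : ℝ, (l u : ℂ) * (Complex.exp (Complex.I * (t : ℂ) * (u : ℂ)) - 1)) -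
          (∑' u : ℝ, (l' u : ℂ) * (Complex.exp (Complex.I * (t : ℂ) * (u : ℂ)) - 1)) := by
        rw [← Summable.tsum_sub (SA t) (SA' t)]
        apply tsum_congr
        intro u
        rw [hm]
        push_cast
        ring
      simp only [key]
      ring
    rw [hsub, Complex.exp_sub, heq t, div_self (Complex.exp_ne_zero _)]
  have hre : ∀ t, (f t).re = 0 := by
    intro t
    have h1 : ‖Complex.exp (f t)‖ = 1 := by rw [hexp t]; simp
    rw [Complex.norm_exp] at h1
    exact (Real.exp_eq_one_iff _).mp h1
  have hfcont : Continuous f := by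
    apply Continuous.add
    · exact (continuous_const.mul Complex.continuous_ofReal).mul continuous_const
    · apply continuous_tsum (u := fun u => 2 * |m u|)
      · intro u
        exact continuous_const.mul
          ((Complex.continuous_exp.comp
            ((continuous_const.mul Complex.continuous_ofReal).mul continuous_const)).sub continuous_const)
      · exact hms.mul_left 2
      · intro u t
        rw [norm_mul, Complex.norm_real, Real.norm_eq_abs]
        calc |m u| * ‖_ - 1‖ ≤ |m u| * 2 := mul_le_mul_of_nonneg_left (hE2 t u) (abs_nonneg _)
          _ = 2 * |m u| := by ring
  have hf0 : f 0 = 0 := by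
    rw [hfdef]
    simp
  have him : ∀ t, (f t).im = 0 := by
    have hint : ∀ t, ∃ n : ℤ, (f t).im / (2 * Real.pi) = n := by
      intro t
      obtain ⟨n, hn⟩ := Complex.exp_eq_one_iff.mp (hexp t)
      refine ⟨n, ?_⟩
      have him2 : (f t).im = n * (2 * Real.pi) := by
        rw [hn]
        simp [Complex.mul_im, Complex.mul_re]
        try ring
      rw [him2]
      field_simp
    have h := aux_int_valued (g := fun t => (f t).im / (2 * Real.pi))
      ((Complex.continuous_im.comp hfcont).div_const _) hint (by simp only [hf0]; simp)
    intro t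
    have ht := h t
    have hpi : (2 * Real.pi) ≠ 0 := by positivity
    field_simp at ht
    simpa using ht
  have hf : ∀ t, f t = 0 := fun t => Complex.ext (hre t) (him t)
  -- Step 3: boundedness kills the linear term
  have Snorm : ∀ t : ℝ, Summable fun u : ℝ =>
      ‖(m u : ℂ) * (Complex.exp (Complex.I * (t : ℂ) * (u : ℂ)) - 1)‖ := by
    intro t
    apply Summable.of_nonneg_of_le (fun u => norm_nonneg _) (fun u => ?_) (hms.mul_left 2)
    rw [norm_mul, Complex.norm_real, Real.norm_eq_abs]
    calc |m u| * ‖_ - 1‖ ≤ |m u| * 2 := mul_le_mul_of_nonneg_left (hE2 t u) (abs_nonneg _)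
      _ = 2 * |m u| := by ring
  set B : ℝ := ∑' u : ℝ, |m u| with hBdef
  have hbound : ∀ t : ℝ,
      ‖∑' u : ℝ, (m u : ℂ) * (Complex.exp (Complex.I * (t : ℂ) * (u : ℂ)) - 1)‖ ≤ 2 * B := by
    intro t
    calc ‖∑' u : ℝ, (m u : ℂ) * (Complex.exp (Complex.I * (t : ℂ) * (u : ℂ)) - 1)‖
        ≤ ∑' u : ℝ, ‖(m u : ℂ) * (Complex.exp (Complex.I * (t : ℂ) * (u : ℂ)) - 1)‖ :=
          norm_tsum_le_tsum_norm (Snorm t)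
      _ ≤ ∑' u : ℝ, 2 * |m u| := by
          apply Summable.tsum_le_tsum _ (Snorm t) (hms.mul_left 2)
          intro u
          rw [norm_mul, Complex.norm_real, Real.norm_eq_abs]
          calc |m u| * ‖_ - 1‖ ≤ |m u| * 2 := mul_le_mul_of_nonneg_left (hE2 t u) (abs_nonneg _)
            _ = 2 * |m u| := by ring
      _ = 2 * B := tsum_mul_left
  have hB0 : (0:ℝ) ≤ B := tsum_nonneg (fun u => abs_nonneg _)
  have htsum_eq : ∀ t : ℝ,
      (∑' u : ℝ, (m u : ℂ) * (Complex.exp (Complex.I * (t : ℂ) * (u : ℂ)) - 1)) =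
        -(Complex.I * (t : ℂ) * ((γ : ℂ) - (γ' : ℂ))) := by
    intro t
    have hft := hf t
    rw [hfdef] at hft
    simp only [] at hft
    linear_combination hft
  have hγ : γ = γ' := by
    by_contra hne
    have hδ : |γ - γ'| ≠ 0 := by
      simp only [ne_eq, abs_eq_zero, sub_eq_zero]
      exact hne
    have hδ0 : 0 < |γ - γ'| := lt_of_le_of_ne (abs_nonneg _) (Ne.symm hδ)
    set t0 : ℝ := (2 * B + 1) / |γ - γ'| with ht0
    have ht0pos : 0 ≤ t0 := by positivity
    have h1 : ‖-(Complex.I * (t0 : ℂ) * ((γ : ℂ) - (γ' : ℂ)))‖ = t0 * |γ - γ'| := by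
      rw [norm_neg, norm_mul, norm_mul, Complex.norm_I, one_mul, Complex.norm_real,
        Real.norm_eq_abs, _root_.abs_of_nonneg ht0pos]
      congr 1
      rw [← Complex.ofReal_sub, Complex.norm_real, Real.norm_eq_abs]
    have h2 : t0 * |γ - γ'| = 2 * B + 1 := by
      rw [ht0, div_mul_cancel₀ _ hδ]
    have h3 := hbound t0
    rw [htsum_eq t0, h1, h2] at h3
    linarith
  -- Step 4: the exponential sum is constant
  have SmC : Summable fun u : ℝ => ((m u : ℝ) : ℂ) := by
    rw [Complex.summable_ofReal]
    exact hms.of_abs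
  have hconst : ∀ t : ℝ,
      (∑' u : ℝ, (m u : ℂ) * Complex.exp (Complex.I * (t : ℂ) * (u : ℂ))) =
        ∑' u : ℝ, ((m u : ℝ) : ℂ) := by
    intro t
    have h0 : (∑' u : ℝ, (m u : ℂ) * (Complex.exp (Complex.I * (t : ℂ) * (u : ℂ)) - 1)) = 0 := by
      rw [htsum_eq t, hγ]
      ring
    have hsplit : (∑' u : ℝ, (m u : ℂ) * (Complex.exp (Complex.I * (t : ℂ) * (u : ℂ)) - 1)) =
        (∑' u : ℝ, (m u : ℂ) * Complex.exp (Complex.I * (t : ℂ) * (u : ℂ))) -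
        ∑' u : ℝ, ((m u : ℝ) : ℂ) := by
      rw [← Summable.tsum_sub (Sm' t) SmC]
      apply tsum_congr
      intro u
      ring
    rw [hsplit] at h0
    linear_combination h0
  -- Step 5: Bohr mean argument
  refine ⟨hγ, fun v => ?_⟩
  suffices hmv : m v = 0 by
    have hx := hmv
    simp only [hm] at hx
    linarith
  rcases eq_or_ne v 0 with rfl | hv
  · rw [hm]; simp [hl0, hl0']
  set S : Set ℝ := Function.support l ∪ Function.support l' ∪ {v} with hSdef
  have hScount : S.Countable := ((hlc.union hlc').union (Set.countable_singleton v))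
  haveI : Countable ↥S := hScount.to_subtype
  have hvS : v ∈ S := by right; rfl
  have hmS : ∀ u : ℝ, u ∉ S → m u = 0 := by
    intro u hu
    simp only [hm]
    simp only [hSdef, Set.mem_union, Set.mem_singleton_iff, not_or] at hu
    have h1 : l u = 0 := Function.notMem_support.mp hu.1.1
    have h2 : l' u = 0 := Function.notMem_support.mp hu.1.2
    rw [h1, h2, sub_zero]
  set C : ℂ := ∑' u : ℝ, ((m u : ℝ) : ℂ) with hCdef
  set c : ℝ → ℂ := fun u => Complex.I * ((u - v : ℝ) : ℂ) with hcdef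
  set d : ℂ := Complex.I * ((-v : ℝ) : ℂ) with hddef
  set F : ↥S → ℝ → ℂ := fun u t => (m u : ℂ) * Complex.exp (c u * (t : ℂ)) with hFdef
  have hnormF : ∀ (u : ↥S) (t : ℝ), ‖F u t‖ = |m u| := by
    intro u t
    rw [hFdef]
    simp only []
    rw [norm_mul, Complex.norm_real, Real.norm_eq_abs, hcdef]
    simp only []
    rw [mul_assoc, ← mul_assoc, aux_norm_exp' ((u:ℝ) - v) t, mul_one]
  have hpoint : ∀ t : ℝ, (∑' u : ↥S, F u t) = C * Complex.exp (d * (t : ℂ)) := by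
    intro t
    have hsupp : Function.support (fun u : ℝ => (m u : ℂ) * Complex.exp (c u * (t : ℂ))) ⊆ S := by
      intro u hu
      by_contra hnot
      apply hu
      simp [hmS u hnot]
    have h1 : (∑' u : ↥S, F u t) = ∑' u : ℝ, (m u : ℂ) * Complex.exp (c u * (t : ℂ)) :=
      tsum_subtype_eq_of_support_subset hsupp
    have h2 : ∀ u : ℝ, (m u : ℂ) * Complex.exp (c u * (t : ℂ)) =
        ((m u : ℂ) * Complex.exp (Complex.I * (t : ℂ) * (u : ℂ))) * Complex.exp (d * (t : ℂ)) := by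
      intro u
      have hexp2 : c u * (t:ℂ) = Complex.I * (t : ℂ) * (u : ℂ) + d * (t:ℂ) := by
        rw [hcdef, hddef]
        push_cast
        ring
      rw [hexp2, Complex.exp_add]
      ring
    rw [h1]
    calc (∑' u : ℝ, (m u : ℂ) * Complex.exp (c u * (t : ℂ)))
        = ∑' u : ℝ, ((m u : ℂ) * Complex.exp (Complex.I * (t : ℂ) * (u : ℂ))) *
            Complex.exp (d * (t : ℂ)) := tsum_congr h2
      _ = (∑' u : ℝ, (m u : ℂ) * Complex.exp (Complex.I * (t : ℂ) * (u : ℂ))) *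
            Complex.exp (d * (t : ℂ)) := tsum_mul_right
      _ = C * Complex.exp (d * (t : ℂ)) := by rw [hconst t]
  have hFcont : ∀ u : ↥S, Continuous (F u) := by
    intro u
    rw [hFdef]
    exact continuous_const.mul
      (Complex.continuous_exp.comp (continuous_const.mul Complex.continuous_ofReal))
  have hFint : ∀ (n : ℕ) (u : ↥S),
      MeasureTheory.IntegrableOn (F u) (Set.Ioc (-(n:ℝ)) n) := by
    intro n u
    exact (hFcont u).integrableOn_Ioc
  have hvolR : ∀ n : ℕ, (MeasureTheory.volume (Set.Ioc (-(n:ℝ)) n)).toReal = 2 * n := by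
    intro n
    rw [Real.volume_Ioc]
    have h2 : ((n:ℝ) - -(n:ℝ)) = 2 * n := by ring
    rw [h2, ENNReal.toReal_ofReal (by positivity)]
  have hintnorm : ∀ (n : ℕ) (u : ↥S),
      (∫ t in Set.Ioc (-(n:ℝ)) n, ‖F u t‖) = |m u| * (2 * n) := by
    intro n u
    have he : (fun t : ℝ => ‖F u t‖) = fun _ : ℝ => |m (u:ℝ)| := funext (hnormF u)
    rw [he, MeasureTheory.setIntegral_const, MeasureTheory.measureReal_def, hvolR n, smul_eq_mul, mul_comm]
  have hswap : ∀ n : ℕ, (∑' u : ↥S, ∫ t in Set.Ioc (-(n:ℝ)) n, F u t) =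
      C * ∫ t in Set.Ioc (-(n:ℝ)) n, Complex.exp (d * (t : ℂ)) := by
    intro n
    rw [MeasureTheory.integral_tsum_of_summable_integral_norm (fun u => hFint n u) ?_]
    · have he : (fun t : ℝ => ∑' u : ↥S, F u t) =
          fun t : ℝ => C * Complex.exp (d * (t : ℂ)) := funext hpoint
      rw [he, MeasureTheory.integral_const_mul]
    · have he : (fun u : ↥S => ∫ t in Set.Ioc (-(n:ℝ)) n, ‖F u t‖) =
          fun u : ↥S => |m (u:ℝ)| * (2 * n) := funext (hintnorm n)
      rw [he]
      exact ((hms.subtype S).mul_right _)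
  set A : ℕ → ℂ := fun n => ((2 * (n:ℝ) : ℝ) : ℂ)⁻¹ *
      ∑' u : ↥S, ∫ t in Set.Ioc (-(n:ℝ)) n, F u t with hAdef
  have hinv0 : Filter.Tendsto (fun n : ℕ => (2 * (n:ℝ))⁻¹) Filter.atTop (nhds 0) := by
    have h1 : (fun n : ℕ => (2 * (n:ℝ))⁻¹) = fun n : ℕ => (1 / (n:ℝ)) * (1/2) := by
      funext n
      rw [mul_inv]
      ring
    rw [h1]
    simpa using tendsto_one_div_atTop_nhds_zero_nat.mul_const (1/2 : ℝ)
  -- Limit 2 : A n → 0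
  have hlim0 : Filter.Tendsto A Filter.atTop (nhds 0) := by
    have hd0 : d ≠ 0 := by
      rw [hddef]
      simp only [ne_eq, mul_eq_zero, Complex.I_ne_zero, false_or, Complex.ofReal_eq_zero]
      intro h
      exact hv (by linarith [neg_eq_zero.mp h])
    have hnormexp : ∀ x : ℝ, ‖Complex.exp (d * (x : ℂ))‖ = 1 := by
      intro x
      rw [hddef, mul_assoc, ← mul_assoc, aux_norm_exp' (-v) x]
    have hbd : ∀ n : ℕ, 1 ≤ n → ‖A n‖ ≤ ‖C‖ * (2 / ‖d‖) * (2 * (n:ℝ))⁻¹ := by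
      intro n hn
      have hnpos : (0:ℝ) < n := by exact_mod_cast hn
      have hle : (-(n:ℝ)) ≤ n := by linarith
      have hI : (∫ t in Set.Ioc (-(n:ℝ)) n, Complex.exp (d * (t : ℂ))) =
          (Complex.exp (d * ((n:ℝ) : ℂ)) - Complex.exp (d * ((-(n:ℝ) : ℝ) : ℂ))) / d := by
        rw [← intervalIntegral.integral_of_le hle, integral_exp_mul_complex hd0]
      have hJ : ‖∫ t in Set.Ioc (-(n:ℝ)) n, Complex.exp (d * (t : ℂ))‖ ≤ 2 / ‖d‖ := by
        rw [hI, norm_div]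
        have hd' : (0:ℝ) < ‖d‖ := norm_pos_iff.mpr hd0
        gcongr
        calc ‖Complex.exp (d * ((n:ℝ) : ℂ)) - Complex.exp (d * ((-(n:ℝ) : ℝ) : ℂ))‖
            ≤ ‖Complex.exp (d * ((n:ℝ) : ℂ))‖ + ‖Complex.exp (d * ((-(n:ℝ) : ℝ) : ℂ))‖ :=
              norm_sub_le _ _
          _ = 2 := by rw [hnormexp ((n:ℝ)), hnormexp (-(n:ℝ))]; norm_num
      rw [hAdef]
      simp only []
      rw [hswap n, norm_mul, norm_mul]
      have hninv : ‖((2 * (n:ℝ) : ℝ) : ℂ)⁻¹‖ = (2 * (n:ℝ))⁻¹ := by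
        rw [norm_inv, Complex.norm_real, Real.norm_eq_abs, abs_of_pos (by positivity)]
      rw [hninv]
      calc (2 * (n:ℝ))⁻¹ * (‖C‖ * ‖∫ t in Set.Ioc (-(n:ℝ)) n, Complex.exp (d * (t : ℂ))‖)
          ≤ (2 * (n:ℝ))⁻¹ * (‖C‖ * (2 / ‖d‖)) := by
            apply mul_le_mul_of_nonneg_left _ (by positivity)
            exact mul_le_mul_of_nonneg_left hJ (norm_nonneg _)
        _ = ‖C‖ * (2 / ‖d‖) * (2 * (n:ℝ))⁻¹ := by ring
    apply squeeze_zero_norm' (Filter.eventually_atTop.mpr ⟨1, hbd⟩)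
    simpa using hinv0.const_mul (‖C‖ * (2 / ‖d‖))
  -- Limit 1 : A n → m v
  have hnormexpc : ∀ (u : ↥S) (x : ℝ), ‖Complex.exp (c (u:ℝ) * ((x:ℝ) : ℂ))‖ = 1 := by
    intro u x
    rw [hcdef]
    simp only []
    rw [aux_norm_exp']
  have hninv : ∀ n : ℕ, ‖((2 * (n:ℝ) : ℝ) : ℂ)⁻¹‖ = (2 * (n:ℝ))⁻¹ := by
    intro n
    rw [norm_inv, Complex.norm_real, Real.norm_eq_abs, _root_.abs_of_nonneg (by positivity)]
  have hJgen : ∀ e : ℂ, e ≠ 0 → (∀ x : ℝ, ‖Complex.exp (e * ((x:ℝ) : ℂ))‖ = 1) →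
      ∀ n : ℕ, 1 ≤ n → ‖∫ t in Set.Ioc (-(n:ℝ)) n, Complex.exp (e * (t : ℂ))‖ ≤ 2 / ‖e‖ := by
    intro e he hne n hn
    have hnpos : (0:ℝ) < n := by exact_mod_cast hn
    have hle : (-(n:ℝ)) ≤ n := by linarith
    have hI : (∫ t in Set.Ioc (-(n:ℝ)) n, Complex.exp (e * (t : ℂ))) =
        (Complex.exp (e * ((n:ℝ) : ℂ)) - Complex.exp (e * ((-(n:ℝ) : ℝ) : ℂ))) / e := by
      rw [← intervalIntegral.integral_of_le hle, integral_exp_mul_complex he]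
    rw [hI, norm_div]
    have he' : (0:ℝ) < ‖e‖ := norm_pos_iff.mpr he
    gcongr
    calc ‖Complex.exp (e * ((n:ℝ) : ℂ)) - Complex.exp (e * ((-(n:ℝ) : ℝ) : ℂ))‖
        ≤ ‖Complex.exp (e * ((n:ℝ) : ℂ))‖ + ‖Complex.exp (e * ((-(n:ℝ) : ℝ) : ℂ))‖ :=
          norm_sub_le _ _
      _ = 2 := by rw [hne ((n:ℝ)), hne (-(n:ℝ))]; norm_num
  have hlim1 : Filter.Tendsto A Filter.atTop (nhds ((m v : ℝ) : ℂ)) := by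
    set g : ℕ → ↥S → ℂ := fun n u => ((2 * (n:ℝ) : ℝ) : ℂ)⁻¹ *
        ∫ t in Set.Ioc (-(n:ℝ)) n, F u t with hgdef
    have hA : ∀ n : ℕ, A n = ∑' u : ↥S, g n u := by
      intro n
      rw [hAdef]
      exact tsum_mul_left.symm
    set G : ↥S → ℂ := fun u => if (u:ℝ) = v then ((m v : ℝ) : ℂ) else 0 with hGdef
    have htsumG : (∑' u : ↥S, G u) = ((m v : ℝ) : ℂ) := by
      rw [tsum_eq_single (⟨v, hvS⟩ : ↥S) ?_]
      · rw [hGdef]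
        simp
      · intro u hu
        rw [hGdef]
        simp only []
        rw [if_neg]
        intro h
        exact hu (Subtype.ext h)
    have hmain : Filter.Tendsto (fun n : ℕ => ∑' u : ↥S, g n u) Filter.atTop
        (nhds (∑' u : ↥S, G u)) := by
      apply tendsto_tsum_of_dominated_convergence (bound := fun u : ↥S => |m (u:ℝ)|)
        (hms.subtype S)
      · -- pointwise limits
        intro u
        rcases eq_or_ne (u:ℝ) v with huv | huv
        · -- u = v : constant term
          have hc0 : c (u:ℝ) = 0 := by
            rw [hcdef]
            simp [huv]
          have hFu : F u = fun _ : ℝ => ((m (u:ℝ) : ℝ) : ℂ) := by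
            funext t
            rw [hFdef]
            simp only []
            rw [hc0]
            simp
          have hgev : ∀ᶠ n : ℕ in Filter.atTop, G u = g n u := by
            filter_upwards [Filter.eventually_ge_atTop 1] with n hn
            have hnpos : (0:ℝ) < n := by exact_mod_cast hn
            have h2n : ((2 * (n:ℝ) : ℝ) : ℂ) ≠ 0 := by
              simp only [ne_eq, Complex.ofReal_eq_zero]
              positivity
            rw [hgdef]
            simp only []
            rw [hFu, MeasureTheory.setIntegral_const, MeasureTheory.measureReal_def, hvolR n, hGdef]
            simp only [if_pos huv]
            rw [Complex.real_smul, ← mul_assoc, inv_mul_cancel₀ h2n, one_mul, huv]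
          exact (tendsto_const_nhds.congr' hgev)
        · -- u ≠ v : oscillatory term
          have hcu0 : c (u:ℝ) ≠ 0 := by
            rw [hcdef]
            simp only [ne_eq, mul_eq_zero, Complex.I_ne_zero, false_or,
              Complex.ofReal_eq_zero, sub_eq_zero]
            exact huv
          have hGu : G u = 0 := by
            rw [hGdef]
            simp only []
            rw [if_neg huv]
          rw [hGu]
          apply squeeze_zero_norm' ?_ ?_
          · exact fun n => |m (u:ℝ)| * (2 / ‖c (u:ℝ)‖) * (2 * (n:ℝ))⁻¹
          · filter_upwards [Filter.eventually_ge_atTop 1] with n hn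
            rw [hgdef]
            simp only []
            have hFint2 : (∫ t in Set.Ioc (-(n:ℝ)) n, F u t) =
                (m (u:ℝ) : ℂ) * ∫ t in Set.Ioc (-(n:ℝ)) n, Complex.exp (c (u:ℝ) * (t : ℂ)) := by
              rw [hFdef]
              simp only []
              rw [MeasureTheory.integral_const_mul]
            rw [norm_mul, hninv n, hFint2, norm_mul, Complex.norm_real, Real.norm_eq_abs]
            calc (2 * (n:ℝ))⁻¹ * (|m (u:ℝ)| *
                  ‖∫ t in Set.Ioc (-(n:ℝ)) n, Complex.exp (c (u:ℝ) * (t : ℂ))‖)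
                ≤ (2 * (n:ℝ))⁻¹ * (|m (u:ℝ)| * (2 / ‖c (u:ℝ)‖)) := by
                  apply mul_le_mul_of_nonneg_left _ (by positivity)
                  exact mul_le_mul_of_nonneg_left
                    (hJgen (c (u:ℝ)) hcu0 (hnormexpc u) n hn) (abs_nonneg _)
              _ = |m (u:ℝ)| * (2 / ‖c (u:ℝ)‖) * (2 * (n:ℝ))⁻¹ := by ring
          · simpa using hinv0.const_mul (|m (u:ℝ)| * (2 / ‖c (u:ℝ)‖))
      · -- uniform bound
        filter_upwards [Filter.eventually_ge_atTop 1] with n hn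
        intro u
        have hnpos : (0:ℝ) < n := by exact_mod_cast hn
        rw [hgdef]
        simp only []
        rw [norm_mul, hninv n]
        have hbd2 : ‖∫ t in Set.Ioc (-(n:ℝ)) n, F u t‖ ≤ |m (u:ℝ)| * (2 * n) := by
          have := MeasureTheory.norm_setIntegral_le_of_norm_le_const
            (μ := MeasureTheory.volume) (s := Set.Ioc (-(n:ℝ)) n) (f := F u)
            (C := |m (u:ℝ)|) measure_Ioc_lt_top
            (fun x _ => le_of_eq (hnormF u x))
          rw [MeasureTheory.measureReal_def, hvolR n] at this
          exact this
        calc (2 * (n:ℝ))⁻¹ * ‖∫ t in Set.Ioc (-(n:ℝ)) n, F u t‖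
            ≤ (2 * (n:ℝ))⁻¹ * (|m (u:ℝ)| * (2 * n)) := by
              apply mul_le_mul_of_nonneg_left hbd2 (by positivity)
          _ = |m (u:ℝ)| := by
              field_simp
    rw [htsumG] at hmain
    apply hmain.congr
    intro n
    exact (hA n).symm
  have huniq := tendsto_nhds_unique hlim1 hlim0
  exact_mod_cast huniq
end

section
/- Let (μ_n)_{n∈ℕ} be a sequence of discrete probability measures on ℝ. If (μ_n) is DS-relatively compact in variation, then there exists N ∈ ℕ such that for all n ≥ N the characteristic function f_n of μ_n satisfies inf_{t∈ℝ} |f_n(t)| > 0, i.e. μ_n ∈ DS for all sufficiently large n. -/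
open MeasureTheory Complex Filter
open scoped ENNReal

/-- Membership in the class `DS`: a discrete probability measure on `ℝ` whose
characteristic function is separated from zero. -/
def IsDS (ν : Measure ℝ) : Prop :=
  IsProbabilityMeasure ν ∧ (∃ s : Set ℝ, s.Countable ∧ ν sᶜ = 0) ∧
    ∃ c : ℝ, 0 < c ∧ ∀ t : ℝ,
      c ≤ ‖(∫ x : ℝ, Complex.exp (Complex.I * (t : ℂ) * (x : ℂ)) ∂ν)‖

/-- `DS`-relative compactness in variation: every subsequence has a further subsequence
converging in total variation to a distribution from `DS`. -/
def DSRelativelyCompactInVariation (μs : ℕ → Measure ℝ) : Prop :=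
  ∀ φ : ℕ → ℕ, StrictMono φ → ∃ ψ : ℕ → ℕ, StrictMono ψ ∧
    ∃ ν : Measure ℝ, IsDS ν ∧
      Tendsto (fun k : ℕ => tvDist (μs (φ (ψ k))) ν) atTop (nhds 0)

/-!
If `μ` is close to `ν` in total variation, then `|∫ g dμ - ∫ g dν| ≤ ‖μ - ν‖` for every `g`
with `|g| ≤ 1` (split along a Hahn decomposition of `μ - ν`); in particular the characteristic
functions are uniformly close. Hence a measure within `c / 2` of a `DS` distribution whose
characteristic function stays above `c` has characteristic function above `c / 2`. If infinitely
many `μₙ` were outside `DS`, a subsequence of them would converge in variation to a `DS`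
distribution, and its members would eventually be within `c / 2` of it.
-/

lemma measure_univ_sub_le_tvDist (μ ν : Measure ℝ) : μ Set.univ - ν Set.univ ≤ tvDist μ ν :=
  le_iSup₂_of_le Set.univ MeasurableSet.univ (by simp)

lemma isFiniteMeasure_of_tvDist_ne_top {μ ν : Measure ℝ} [IsFiniteMeasure ν]
    (h : tvDist μ ν ≠ ∞) : IsFiniteMeasure μ where
  measure_univ_lt_top := calc
    μ Set.univ ≤ tvDist μ ν + ν Set.univ := tsub_le_iff_right.1 (measure_univ_sub_le_tvDist μ ν)
    _ < ∞ := ENNReal.add_lt_top.2 ⟨h.lt_top, measure_lt_top ν _⟩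

lemma ofReal_norm_integral_sub_le_of_le {α E : Type*} [MeasurableSpace α]
    [NormedAddCommGroup E] [NormedSpace ℝ E] {μ ν : Measure α} [IsFiniteMeasure μ]
    (hνμ : ν ≤ μ) {g : α → E} (hg : StronglyMeasurable g) (hb : ∀ x, ‖g x‖ ≤ 1) :
    ENNReal.ofReal ‖(∫ x, g x ∂μ) - ∫ x, g x ∂ν‖ ≤ μ Set.univ - ν Set.univ := by
  have : IsFiniteMeasure ν := isFiniteMeasure_of_le μ hνμ
  have hint : ∀ (ρ : Measure α) [IsFiniteMeasure ρ], Integrable g ρ := fun _ _ =>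
    .of_bound hg.aestronglyMeasurable 1 (ae_of_all _ hb)
  have hsub : (∫ x, g x ∂μ) - ∫ x, g x ∂ν = ∫ x, g x ∂(μ - ν) := by
    conv_lhs => rw [← Measure.sub_add_cancel_of_le hνμ]
    rw [integral_add_measure (hint _) (hint _), add_sub_cancel_right]
  rw [hsub, ← Measure.sub_apply MeasurableSet.univ hνμ]
  refine ENNReal.ofReal_le_of_le_toReal ?_
  simpa [Measure.real] using norm_integral_le_of_norm_le_const (μ := μ - ν) (ae_of_all _ hb)

lemma ofReal_norm_integral_sub_le_tvDist {E : Type*} [NormedAddCommGroup E] [NormedSpace ℝ E]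
    {μ ν : Measure ℝ} [IsFiniteMeasure μ] [IsFiniteMeasure ν] {g : ℝ → E}
    (hg : StronglyMeasurable g) (hb : ∀ x, ‖g x‖ ≤ 1) :
    ENNReal.ofReal ‖(∫ x, g x ∂μ) - ∫ x, g x ∂ν‖ ≤ tvDist μ ν := by
  obtain ⟨s, hs, hνμ, hμν⟩ := hahn_decomposition μ ν
  have hint : ∀ (ρ : Measure ℝ) [IsFiniteMeasure ρ], Integrable g ρ := fun _ _ =>
    .of_bound hg.aestronglyMeasurable 1 (ae_of_all _ hb)
  have hle_on : ∀ {ρ₁ ρ₂ : Measure ℝ} {u : Set ℝ}, MeasurableSet u →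
      (∀ t, MeasurableSet t → t ⊆ u → ρ₁ t ≤ ρ₂ t) → ρ₁.restrict u ≤ ρ₂.restrict u :=
    fun hu h => Measure.le_iff.2 fun t ht => by
      simpa only [Measure.restrict_apply ht] using h _ (ht.inter hu) Set.inter_subset_right
  have hsplit : (∫ x, g x ∂μ) - ∫ x, g x ∂ν =
      ((∫ x in s, g x ∂μ) - ∫ x in s, g x ∂ν) - ((∫ x in sᶜ, g x ∂ν) - ∫ x in sᶜ, g x ∂μ) := by
    rw [← integral_add_compl hs (hint μ), ← integral_add_compl hs (hint ν)]
    abel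
  have hs_bound := ofReal_norm_integral_sub_le_of_le (hle_on hs hνμ) hg hb
  have hsc_bound := ofReal_norm_integral_sub_le_of_le (hle_on hs.compl hμν) hg hb
  simp only [Measure.restrict_apply_univ] at hs_bound hsc_bound
  calc ENNReal.ofReal ‖(∫ x, g x ∂μ) - ∫ x, g x ∂ν‖
      ≤ ENNReal.ofReal (‖(∫ x in s, g x ∂μ) - ∫ x in s, g x ∂ν‖
          + ‖(∫ x in sᶜ, g x ∂ν) - ∫ x in sᶜ, g x ∂μ‖) :=
        ENNReal.ofReal_le_ofReal (hsplit ▸ norm_sub_le _ _)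
    _ ≤ (μ s - ν s) + (ν sᶜ - μ sᶜ) := ENNReal.ofReal_add_le.trans (add_le_add hs_bound hsc_bound)
    _ ≤ tvDist μ ν := le_iSup₂_of_le s hs le_rfl

lemma sub_le_norm_integral_exp_of_tvDist_lt {μ ν : Measure ℝ} [IsFiniteMeasure ν] {c ε : ℝ}
    (hν : ∀ t : ℝ, c ≤ ‖∫ x : ℝ, Complex.exp (Complex.I * (t : ℂ) * (x : ℂ)) ∂ν‖)
    (hμν : tvDist μ ν < ENNReal.ofReal ε) (t : ℝ) :
    c - ε ≤ ‖∫ x : ℝ, Complex.exp (Complex.I * (t : ℂ) * (x : ℂ)) ∂μ‖ := by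
  have : IsFiniteMeasure μ := isFiniteMeasure_of_tvDist_ne_top (hμν.trans ENNReal.ofReal_lt_top).ne
  have hmeas : Measurable fun x : ℝ => Complex.exp (Complex.I * t * x) := by fun_prop
  have hnorm (x : ℝ) : ‖Complex.exp (Complex.I * t * x)‖ ≤ 1 := by
    rw [mul_assoc, ← Complex.ofReal_mul, Complex.norm_exp_I_mul_ofReal]
  have hclose := (ofReal_norm_integral_sub_le_tvDist hmeas.stronglyMeasurable hnorm).trans_lt hμν
  have := norm_sub_norm_le (∫ x : ℝ, Complex.exp (Complex.I * t * x) ∂ν)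
    (∫ x : ℝ, Complex.exp (Complex.I * t * x) ∂μ)
  rw [norm_sub_rev] at this
  linarith [(ENNReal.ofReal_lt_ofReal_iff_of_nonneg (norm_nonneg _)).1 hclose, hν t]

theorem eventually_DS_of_DSRelativelyCompact_general
    (μs : ℕ → Measure ℝ)
    (hcomp : DSRelativelyCompactInVariation μs) :
    ∃ N : ℕ, ∀ n : ℕ, N ≤ n → ∃ c : ℝ, 0 < c ∧ ∀ t : ℝ,
      c ≤ ‖(∫ x : ℝ, Complex.exp (Complex.I * (t : ℂ) * (x : ℂ)) ∂(μs n))‖ := by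
  by_contra! hcon
  obtain ⟨φ, hφ, hbad⟩ := extraction_of_frequently_atTop (frequently_atTop.2 hcon)
  obtain ⟨ψ, -, ν, ⟨hνprob, -, c, hc, hlow⟩, htend⟩ := hcomp φ hφ
  obtain ⟨k, hk⟩ := (htend.eventually_lt_const (ENNReal.ofReal_pos.2 (half_pos hc))).exists
  obtain ⟨t, ht⟩ := hbad (ψ k) (c / 2) (half_pos hc)
  linarith [sub_le_norm_integral_exp_of_tvDist_lt hlow hk t]

/-- If a sequence of discrete probability measures on `ℝ` is
`DS`-relatively compact in variation, then all its members with sufficiently large index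
belong to `DS`: their characteristic functions are separated from zero. -/
theorem eventually_DS_of_DSRelativelyCompact
    (μs : ℕ → Measure ℝ) (hprob : ∀ n : ℕ, IsProbabilityMeasure (μs n))
    (hdiscrete : ∀ n : ℕ, ∃ s : Set ℝ, s.Countable ∧ μs n sᶜ = 0)
    (hcomp : DSRelativelyCompactInVariation μs) :
    ∃ N : ℕ, ∀ n : ℕ, N ≤ n → ∃ c : ℝ, 0 < c ∧ ∀ t : ℝ,
      c ≤ ‖(∫ x : ℝ, Complex.exp (Complex.I * (t : ℂ) * (x : ℂ)) ∂(μs n))‖ :=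
  eventually_DS_of_DSRelativelyCompact_general μs hcomp
end
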